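/- Let c be a family of upsets of E_n. If two elements of level L^i of E_n have the same ∼^c_ω-type, and all elements of every level L^q for q > i have the same 0-type over c, then all elements of level L^{i+2^n+1} (and all later levels) have the same ∼^c_ω-type. -/
import Mathlib


/-- The carrier of the Esakia-type poset `E_n`: points `x^l_i` with
`l ≤ 2^n`, `i < ω`, together with a bottom point `x_∞` (encoded as `none`). -/
def EnC (n : ℕ) : Type := Option {p : ℕ × ℕ // p.1 ≤ 2 ^ n}

/-- The point `x^l_i` of `E_n`. -/
def EnPt (n : ℕ) (l i : ℕ) (h : l ≤ 2 ^ n) : EnC n := some ⟨(l, i), h⟩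

/-- The bottom point `x_∞` of `E_n`. -/
def EnInf (n : ℕ) : EnC n := none

/-- The order of `E_n`: `x_∞` is below everything; `x^l_{i+1} ≤ x^{l'}_i`
iff `l' ≠ l + 1`; every element of level `i + t` (`t ≥ 2`) is below every
element of level `i`. -/
def EnLe {n : ℕ} : EnC n → EnC n → Prop
  | none, _ => True
  | some _, none => False
  | some p, some q =>
      p.1 = q.1 ∨ (p.1.2 = q.1.2 + 1 ∧ q.1.1 ≠ p.1.1 + 1) ∨ q.1.2 + 2 ≤ p.1.2

instance (n : ℕ) : PartialOrder (EnC n) where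
  le := EnLe
  le_refl a := by cases a with
    | none => trivial
    | some p => exact Or.inl rfl
  le_trans a b c hab hbc := by
    cases a with
    | none => trivial
    | some p =>
      cases b with
      | none => simp only [EnLe] at hab
      | some q =>
        cases c with
        | none => simp only [EnLe] at hbc
        | some r =>
          simp only [EnLe] at *
          rcases hab with h1 | h1 | h1 <;> rcases hbc with h2 | h2 | h2
          · exact Or.inl (h1.trans h2)
          · rw [h1]; exact Or.inr (Or.inl h2)
          · rw [h1]; exact Or.inr (Or.inr h2)
          · rw [← h2]; exact Or.inr (Or.inl h1)
          · exact Or.inr (Or.inr (by omega))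
          · exact Or.inr (Or.inr (by omega))
          · rw [← h2]; exact Or.inr (Or.inr h1)
          · exact Or.inr (Or.inr (by omega))
          · exact Or.inr (Or.inr (by omega))
  le_antisymm a b hab hba := by
    cases a with
    | none => cases b with
      | none => rfl
      | some q => simp only [EnLe] at hba
    | some p =>
      cases b with
      | none => simp only [EnLe] at hab
      | some q =>
        simp only [EnLe] at hab hba
        congr 1
        exact Subtype.ext (by rcases hab with h | h | h <;> rcases hba with h' | h' | h' <;>
          first | exact h | exact h'.symm | omega)

/-- The `j`-th level of `E_n`. -/
def EnLevel (n j : ℕ) : Set (EnC n) := {p | ∃ (l : ℕ) (h : l ≤ 2 ^ n), p = EnPt n l j h}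

/-- The bisimulation-style relations `∼^G_m` over a family `G` of subsets. -/
def simRel {α : Type*} [Preorder α] (G : Set (Set α)) : ℕ → α → α → Prop
  | 0 => fun x y => ∀ g ∈ G, (x ∈ g ↔ y ∈ g)
  | m + 1 => fun x y =>
      (∀ z, x ≤ z → ∃ w, y ≤ w ∧ simRel G m z w) ∧
      (∀ w, y ≤ w → ∃ z, x ≤ z ∧ simRel G m z w)

/-- `x ∼^G_ω y`. -/
def simOmega {α : Type*} [Preorder α] (G : Set (Set α)) (x y : α) : Prop :=
  ∀ m, simRel G m x y

lemma simRel_refl {α : Type*} [Preorder α] (G : Set (Set α)) : ∀ m (x : α), simRel G m x x := by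
  intro m
  induction m with
  | zero => intro x g _; exact Iff.rfl
  | succ m ih => intro x; exact ⟨fun z hz => ⟨z, hz, ih z⟩, fun z hz => ⟨z, hz, ih z⟩⟩

lemma simRel_symm {α : Type*} [Preorder α] (G : Set (Set α)) :
    ∀ m (x y : α), simRel G m x y → simRel G m y x := by
  intro m
  induction m with
  | zero => intro x y h g hg; exact (h g hg).symm
  | succ m ih =>
    intro x y h
    exact ⟨fun z hz => (h.2 z hz).imp (fun w hw => ⟨hw.1, ih _ _ hw.2⟩),
           fun w hw => (h.1 w hw).imp (fun z hz => ⟨hz.1, ih _ _ hz.2⟩)⟩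

lemma EnPt_le_iff {n l j l' j' : ℕ} (h : l ≤ 2^n) (h' : l' ≤ 2^n) :
    EnPt n l j h ≤ EnPt n l' j' h' ↔
      ((l = l' ∧ j = j') ∨ (j = j' + 1 ∧ l' ≠ l + 1) ∨ j' + 2 ≤ j) := by
  show ((l, j) = (l', j') ∨ (j = j' + 1 ∧ l' ≠ l + 1) ∨ j' + 2 ≤ j) ↔ _
  rw [Prod.mk.injEq]

lemma En_exists_other (N a b : ℕ) (hN : 1 ≤ N) (ha : a ≤ N) (hb : b ≤ N) (hab : a ≠ b)
    (d k : ℕ) (hd : 1 ≤ d) :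
    ∃ s, s ≤ N ∧ s ≠ k ∧ (s + d = a ∨ s + d = b ∨ N + 1 ≤ s + d) := by
  by_cases h1 : k = N
  · by_cases h2 : 2 ≤ d
    · exact ⟨N - 1, by omega, by omega, by omega⟩
    · exact ⟨max a b - 1, by omega, by omega, by omega⟩
  · exact ⟨N, le_rfl, fun h => h1 h.symm, by omega⟩

lemma En_main (n i a b : ℕ) (ha : a ≤ 2^n) (hb : b ≤ 2^n) (hab : a ≠ b)
    (c : Set (Set (EnC n)))
    (hpq : simOmega c (EnPt n a i ha) (EnPt n b i hb))
    (h0 : ∀ q', i < q' → ∀ p ∈ EnLevel n q', ∀ r ∈ EnLevel n q', simRel c 0 p r) :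
    ∀ m j l l' (hl : l ≤ 2^n) (hl' : l' ≤ 2^n), i + 1 ≤ j →
      (l + (j - i) = a ∨ l + (j - i) = b ∨ 2^n + 1 ≤ l + (j - i)) →
      (l' + (j - i) = a ∨ l' + (j - i) = b ∨ 2^n + 1 ≤ l' + (j - i)) →
      simRel c m (EnPt n l j hl) (EnPt n l' j hl') := by
  intro m
  induction m with
  | zero =>
    intro j l l' hl hl' hj _ _
    exact h0 j (by omega) _ ⟨l, hl, rfl⟩ _ ⟨l', hl', rfl⟩
  | succ m ih =>
    have hN : 1 ≤ 2^n := Nat.one_le_pow n 2 (by norm_num)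
    have aux : ∀ (j l l' : ℕ) (hl : l ≤ 2^n) (hl' : l' ≤ 2^n), i + 1 ≤ j →
        (l + (j - i) = a ∨ l + (j - i) = b ∨ 2^n + 1 ≤ l + (j - i)) →
        (l' + (j - i) = a ∨ l' + (j - i) = b ∨ 2^n + 1 ≤ l' + (j - i)) →
        ∀ z, EnPt n l j hl ≤ z → ∃ w, EnPt n l' j hl' ≤ w ∧ simRel c m z w := by
      intro j l l' hl hl' hj hSl hSl' z hz
      cases z with
      | none => exact absurd hz (fun h => h)
      | some v =>
        obtain ⟨⟨k, jz⟩, hk⟩ := v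
        have hz' := (EnPt_le_iff hl hk).mp hz
        rcases hz' with ⟨rfl, rfl⟩ | ⟨rfl, hkl⟩ | hlow
        · exact ⟨EnPt n l' j hl', le_refl _, ih j l l' hk hl' hj hSl hSl'⟩
        · by_cases hkl' : k = l' + 1
          · subst hkl'
            rcases Nat.lt_or_ge jz (i + 1) with hji | hji
            · have hji' : i = jz := by omega
              subst hji'
              have hab' : l' + 1 = a ∨ l' + 1 = b := by omega
              rcases hab' with h | h
              · refine ⟨EnPt n b i hb,
                  (EnPt_le_iff hl' hb).mpr (Or.inr (Or.inl ⟨rfl, by omega⟩)), ?_⟩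
                have := hpq m
                subst h
                exact this
              · refine ⟨EnPt n a i ha,
                  (EnPt_le_iff hl' ha).mpr (Or.inr (Or.inl ⟨rfl, by omega⟩)), ?_⟩
                have := simRel_symm c m _ _ (hpq m)
                subst h
                exact this
            · obtain ⟨s, hs, hsne, hsp⟩ :=
                En_exists_other (2^n) a b hN ha hb hab (jz - i) (l' + 1) (by omega)
              refine ⟨EnPt n s jz hs,
                (EnPt_le_iff hl' hs).mpr (Or.inr (Or.inl ⟨rfl, by omega⟩)), ?_⟩
              exact ih jz (l' + 1) s hk hs hji (by omega) (by omega)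
          · exact ⟨EnPt n k jz hk,
              (EnPt_le_iff hl' hk).mpr (Or.inr (Or.inl ⟨rfl, hkl'⟩)), simRel_refl c m _⟩
        · exact ⟨EnPt n k jz hk,
            (EnPt_le_iff hl' hk).mpr (Or.inr (Or.inr hlow)), simRel_refl c m _⟩
    intro j l l' hl hl' hj hSl hSl'
    refine ⟨fun z hz => aux j l l' hl hl' hj hSl hSl' z hz, fun w hw => ?_⟩
    obtain ⟨z, hz, hr⟩ := aux j l' l hl' hl hj hSl' hSl w hw
    exact ⟨z, hz, simRel_symm c m _ _ hr⟩

/-- If two distinct elements of level `i` of `E_n` have the same `∼^c_ω`-type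
over a family `c` of upsets, and all elements of each level `q > i` share the
same `0`-type, then all elements of level `i + 2^n + 1` and of all later
levels have the same `∼^c_ω`-type. -/
theorem EnLevel_types_collapse (n i : ℕ) (c : Set (Set (EnC n)))
    (hc : ∀ g ∈ c, IsUpperSet g)
    (hex : ∃ p ∈ EnLevel n i, ∃ q ∈ EnLevel n i, p ≠ q ∧ simOmega c p q)
    (h0 : ∀ q', i < q' → ∀ p ∈ EnLevel n q', ∀ r ∈ EnLevel n q', simRel c 0 p r) :
    ∀ t, i + 2 ^ n + 1 ≤ t → ∀ p ∈ EnLevel n t, ∀ r ∈ EnLevel n t,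
      simOmega c p r := by
  obtain ⟨p, ⟨a, ha, rfl⟩, q, ⟨b, hb, rfl⟩, hne, hpq⟩ := hex
  have hab : a ≠ b := by
    intro h
    subst h
    exact hne rfl
  intro t ht p hp r hr m
  obtain ⟨l, hl, rfl⟩ := hp
  obtain ⟨l', hl', rfl⟩ := hr
  have hN : 1 ≤ 2^n := Nat.one_le_pow n 2 (by norm_num)
  exact En_main n i a b ha hb hab c hpq h0 m t l l' hl hl'
    (by omega) (by omega) (by omega)
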